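/- Let a₁, a₂, a₃, a₄, a₅ ∈ ℂ be all nonzero and α, β, γ ∈ ℂ. If all nine quadrics Q₀, Q₁, Q₂, Q₀′, Q₁′, Q₂′, Q₀″, Q₁″, Q₂″ vanish at the point (x₀,…,x₅) = (0, a₁, a₂, a₃, a₄, a₅), then α ≠ 0, β ≠ 0, 1/α + 1/β = −2a₅a₁/a₃², α + β = −2a₁²/(a₃a₅) = −2a₅²/(a₁a₃), and αβ = a₁a₃/a₅². -/

import Mathlib

/-!
At a point with `x₀ = 0` the quadrics become scalar equations. `Q₁ = 0` and `Q₁′ = 0` say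
`α a₃a₅ = -(a₁² + a₄²)` and `β a₃a₅ = a₄² - a₁²`: their sum gives `(α + β) a₃a₅ = -2a₁²` and
their product `αβ (a₃a₅)² = a₁⁴ - a₄⁴`; likewise `Q₂ - Q₂′` gives `(α + β) a₁a₃ = -2a₅²`.
Eliminating `α` between `Q₀` and `Q₁` yields `a₃³a₅ = (a₁² + a₄²)(a₂a₄ + a₅a₁)`, and the
relation `a₁a₂ = -a₄a₅` from `Q₁″` turns `a₁` times this into `a₁a₃³ = a₁⁴ - a₄⁴`.
Hence `αβ a₅² = a₁a₃ ≠ 0`, and `1/α + 1/β = (α + β)/(αβ)` gives the remaining relation.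
-/

open MvPolynomial

noncomputable section

abbrev R6 : Type := MvPolynomial (Fin 6) ℂ

def Q0 (α : ℂ) : R6 := X 0 ^ 2 + X 3 ^ 2 + C α * (X 2 * X 4 + X 5 * X 1)
def Q1 (α : ℂ) : R6 := X 1 ^ 2 + X 4 ^ 2 + C α * (X 3 * X 5 + X 0 * X 2)
def Q2 (α : ℂ) : R6 := X 2 ^ 2 + X 5 ^ 2 + C α * (X 4 * X 0 + X 1 * X 3)
def Q0' (β : ℂ) : R6 := X 0 ^ 2 - X 3 ^ 2 + C β * (X 2 * X 4 - X 5 * X 1)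
def Q1' (β : ℂ) : R6 := X 1 ^ 2 - X 4 ^ 2 + C β * (X 3 * X 5 - X 0 * X 2)
def Q2' (β : ℂ) : R6 := X 2 ^ 2 - X 5 ^ 2 + C β * (X 4 * X 0 - X 1 * X 3)
def Q0'' (γ : ℂ) : R6 := X 0 * X 1 + X 3 * X 4 + C γ * (X 2 * X 5)
def Q1'' (γ : ℂ) : R6 := X 1 * X 2 + X 4 * X 5 + C γ * (X 3 * X 0)
def Q2'' (γ : ℂ) : R6 := X 2 * X 3 + X 5 * X 0 + C γ * (X 4 * X 1)

section

variable {K : Type*} [Field K] {a₁ a₂ a₃ a₄ a₅ α β : K}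

theorem mul_pow_three_eq_pow_four_sub_pow_four
    (hQ0 : a₃ ^ 2 + α * (a₂ * a₄ + a₅ * a₁) = 0) (hQ1 : a₁ ^ 2 + a₄ ^ 2 + α * (a₃ * a₅) = 0)
    (hQ1'' : a₁ * a₂ + a₄ * a₅ = 0) (h₅ : a₅ ≠ 0) :
    a₁ * a₃ ^ 3 = a₁ ^ 4 - a₄ ^ 4 :=
  mul_right_cancel₀ h₅ <| by
    linear_combination a₁ * a₃ * a₅ * hQ0 - a₁ * (a₂ * a₄ + a₅ * a₁) * hQ1
      + a₄ * (a₁ ^ 2 + a₄ ^ 2) * hQ1''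

theorem mul_mul_sq_eq_mul
    (hQ1 : a₁ ^ 2 + a₄ ^ 2 + α * (a₃ * a₅) = 0) (hQ1' : a₁ ^ 2 - a₄ ^ 2 + β * (a₃ * a₅) = 0)
    (hquartic : a₁ * a₃ ^ 3 = a₁ ^ 4 - a₄ ^ 4) (h₃ : a₃ ≠ 0) :
    α * β * a₅ ^ 2 = a₁ * a₃ :=
  mul_right_cancel₀ (pow_ne_zero 2 h₃) <| by
    linear_combination β * a₃ * a₅ * hQ1 - (a₁ ^ 2 + a₄ ^ 2) * hQ1' - hquartic

end

theorem intermediate_relations_general (a₁ a₂ a₃ a₄ a₅ : ℂ)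
    (h₁ : a₁ ≠ 0) (h₃ : a₃ ≠ 0) (h₅ : a₅ ≠ 0)
    (α β γ : ℂ)
    (hQ0 : eval ![0, a₁, a₂, a₃, a₄, a₅] (Q0 α) = 0)
    (hQ1 : eval ![0, a₁, a₂, a₃, a₄, a₅] (Q1 α) = 0)
    (hQ2 : eval ![0, a₁, a₂, a₃, a₄, a₅] (Q2 α) = 0)
    (hQ1' : eval ![0, a₁, a₂, a₃, a₄, a₅] (Q1' β) = 0)
    (hQ2' : eval ![0, a₁, a₂, a₃, a₄, a₅] (Q2' β) = 0)
    (hQ1'' : eval ![0, a₁, a₂, a₃, a₄, a₅] (Q1'' γ) = 0) :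
    α ≠ 0 ∧ β ≠ 0 ∧
    1 / α + 1 / β = -(2 * a₅ * a₁) / a₃ ^ 2 ∧
    α + β = -(2 * a₁ ^ 2) / (a₃ * a₅) ∧
    α + β = -(2 * a₅ ^ 2) / (a₁ * a₃) ∧
    α * β = a₁ * a₃ / a₅ ^ 2 := by
  simp only [Q0, Q1, Q2, Q1', Q2', Q1'', eval_add, eval_sub, eval_mul, eval_pow, eval_X, eval_C,
    Matrix.cons_val, ne_eq, OfNat.ofNat_ne_zero, not_false_eq_true, zero_pow, zero_add, zero_sub,
    zero_mul, mul_zero, add_zero, sub_zero] at hQ0 hQ1 hQ2 hQ1' hQ2' hQ1''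
  have hsum : (α + β) * (a₃ * a₅) = -2 * a₁ ^ 2 := by linear_combination hQ1 + hQ1'
  have hsum' : (α + β) * (a₁ * a₃) = -2 * a₅ ^ 2 := by linear_combination hQ2 - hQ2'
  have hprod : α * β * a₅ ^ 2 = a₁ * a₃ :=
    mul_mul_sq_eq_mul hQ1 hQ1' (mul_pow_three_eq_pow_four_sub_pow_four hQ0 hQ1 hQ1'' h₅) h₃
  obtain ⟨hα, hβ⟩ : α ≠ 0 ∧ β ≠ 0 :=
    mul_ne_zero_iff.mp <| left_ne_zero_of_mul <| hprod ▸ mul_ne_zero h₁ h₃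
  refine ⟨hα, hβ, ?_, ?_, ?_, ?_⟩
  · field_simp
    refine mul_right_cancel₀ h₅ ?_
    linear_combination a₃ * hsum + 2 * a₁ * hprod
  · field_simp
    linear_combination hsum
  · field_simp
    linear_combination hsum'
  · field_simp
    linear_combination hprod

/-- If the nine quadrics all vanish at `(0, a₁, a₂, a₃, a₄, a₅)` with all `aᵢ ≠ 0`, then
`α ≠ 0`, `β ≠ 0`, `1/α + 1/β = −2a₅a₁/a₃²`, `α + β = −2a₁²/(a₃a₅) = −2a₅²/(a₁a₃)` and `αβ = a₁a₃/a₅²`. -/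
theorem intermediate_relations (a₁ a₂ a₃ a₄ a₅ : ℂ)
    (h₁ : a₁ ≠ 0) (h₂ : a₂ ≠ 0) (h₃ : a₃ ≠ 0) (h₄ : a₄ ≠ 0) (h₅ : a₅ ≠ 0)
    (α β γ : ℂ)
    (hQ0 : eval ![0, a₁, a₂, a₃, a₄, a₅] (Q0 α) = 0)
    (hQ1 : eval ![0, a₁, a₂, a₃, a₄, a₅] (Q1 α) = 0)
    (hQ2 : eval ![0, a₁, a₂, a₃, a₄, a₅] (Q2 α) = 0)
    (hQ0' : eval ![0, a₁, a₂, a₃, a₄, a₅] (Q0' β) = 0)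
    (hQ1' : eval ![0, a₁, a₂, a₃, a₄, a₅] (Q1' β) = 0)
    (hQ2' : eval ![0, a₁, a₂, a₃, a₄, a₅] (Q2' β) = 0)
    (hQ0'' : eval ![0, a₁, a₂, a₃, a₄, a₅] (Q0'' γ) = 0)
    (hQ1'' : eval ![0, a₁, a₂, a₃, a₄, a₅] (Q1'' γ) = 0)
    (hQ2'' : eval ![0, a₁, a₂, a₃, a₄, a₅] (Q2'' γ) = 0) :
    α ≠ 0 ∧ β ≠ 0 ∧
    1 / α + 1 / β = -(2 * a₅ * a₁) / a₃ ^ 2 ∧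
    α + β = -(2 * a₁ ^ 2) / (a₃ * a₅) ∧
    α + β = -(2 * a₅ ^ 2) / (a₁ * a₃) ∧
    α * β = a₁ * a₃ / a₅ ^ 2 :=
  intermediate_relations_general a₁ a₂ a₃ a₄ a₅ h₁ h₃ h₅ α β γ hQ0 hQ1 hQ2 hQ1' hQ2' hQ1''
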